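/- Let A ∈ ℂ^{m×n×p}, W ∈ ℂ^{n×m×p}, rank_M(A) = rp, rank_M(W) = sp with sp ≤ rp. Suppose W *_M P = Q *_M R where: P ∈ ℂ^{m×m×p} satisfies P *_M P^* = I_M = P^* *_M P; Q ∈ ℂ^{n×n×p} satisfies Q *_M Q^* = I_M = Q^* *_M Q; R ∈ ℂ^{n×m×p} has rank_M(R) = sp and its horizontal slices s+1,…,n vanish. Let Q̃ = Q(:,1:s,:) and R̃ = R(1:s,:,:), and suppose rank_M(R̃) = sp. If X is an outer inverse of A with R_M(X) = R_M(W) and N_M(X) = N_M(W), then R_M(X) = R_M(Q̃) and N_M(X) = N_M(R̃ *_M P^*); i.e., A^=_{R_M(W),N_M(W)} = A^=_{R_M(Q̃),N_M(R̃ *_M P^*)}. -/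

import Mathlib

open Matrix Finset

/-- A third-order tensor in `ℂ^{m×n×p}`, given by its `p` frontal slices. -/
abbrev Tensor (m n p : ℕ) := Fin p → Matrix (Fin m) (Fin n) ℂ

/-- The transform `Â = A ×₃ M` (mode-3 product with `M`). -/
noncomputable def hatT {m n p : ℕ} (M : Matrix (Fin p) (Fin p) ℂ) (A : Tensor m n p) :
    Tensor m n p :=
  fun l => ∑ s, M l s • A s

/-- `mat(A)`: the block-diagonal matrix whose blocks are frontal slices of `A ×₃ M`. -/
noncomputable def matT {m n p : ℕ} (M : Matrix (Fin p) (Fin p) ℂ) (A : Tensor m n p) :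
    Matrix (Fin m × Fin p) (Fin n × Fin p) ℂ :=
  Matrix.blockDiagonal (hatT M A)

/-- The M-product `A *_M B`, determined by `mat(A *_M B) = mat(A)·mat(B)`. -/
noncomputable def mprod {m n k p : ℕ} (M : Matrix (Fin p) (Fin p) ℂ)
    (A : Tensor m n p) (B : Tensor n k p) : Tensor m k p :=
  fun l => ∑ s, M⁻¹ l s • (hatT M A s * hatT M B s)

/-- The conjugate transpose `A^*`, determined by `mat(A^*) = mat(A)^*`. -/
noncomputable def mstar {m n p : ℕ} (M : Matrix (Fin p) (Fin p) ℂ) (A : Tensor m n p) :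
    Tensor n m p :=
  fun l => ∑ s, M⁻¹ l s • (hatT M A s)ᴴ

/-- The identity tensor `I_M ∈ ℂ^{m×m×p}`, determined by `mat(I_M) = I`. -/
noncomputable def idT {p : ℕ} (M : Matrix (Fin p) (Fin p) ℂ) (m : ℕ) : Tensor m m p :=
  fun l => ∑ s, M⁻¹ l s • (1 : Matrix (Fin m) (Fin m) ℂ)

/-- M-product powers of a square tensor. -/
noncomputable def mpow {m p : ℕ} (M : Matrix (Fin p) (Fin p) ℂ) (A : Tensor m m p) :
    ℕ → Tensor m m p
  | 0 => idT M m
  | k + 1 => mprod M A (mpow M A k)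

/-- `R_M(A)`: the column space of `mat(A)`. -/
noncomputable def rangeM {m n p : ℕ} (M : Matrix (Fin p) (Fin p) ℂ) (A : Tensor m n p) :
    Submodule ℂ (Fin m × Fin p → ℂ) :=
  LinearMap.range (matT M A).mulVecLin

/-- `N_M(A)`: the kernel of `mat(A)`. -/
noncomputable def kerM {m n p : ℕ} (M : Matrix (Fin p) (Fin p) ℂ) (A : Tensor m n p) :
    Submodule ℂ (Fin n × Fin p → ℂ) :=
  LinearMap.ker (matT M A).mulVecLin

/-- `rank_M(A) = rank(mat(A))`. -/
noncomputable def rankM {m n p : ℕ} (M : Matrix (Fin p) (Fin p) ℂ) (A : Tensor m n p) : ℕ :=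
  (matT M A).rank

/-- The first `s` lateral slices `Q(:,1:s,:)`. -/
def latSlice {n s p : ℕ} (hsn : s ≤ n) (Q : Tensor n n p) : Tensor n s p :=
  fun l => (Q l).submatrix id (Fin.castLE hsn)

/-- The first `s` horizontal slices `R(1:s,:,:)`. -/
def horSlice {n m s p : ℕ} (hsn : s ≤ n) (R : Tensor n m p) : Tensor s m p :=
  fun l => (R l).submatrix (Fin.castLE hsn) id

/-- Frobenius norm of a complex matrix. -/
noncomputable def frobNorm {α β : Type*} [Fintype α] [Fintype β] (X : Matrix α β ℂ) : ℝ :=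
  Real.sqrt (∑ i, ∑ j, ‖X i j‖ ^ 2)

/-! Passing to the block-diagonal matrices `mat(·)`, `P Pᴴ = 1` and the vanishing horizontal
slices of `R` give the factorization `mat W = mat Q̃ · mat (R̃ *_M P^*)`. Because `Qᴴ Q = 1` and
`Q̃` consists of columns of `Q`, the left factor has a left inverse, so it does not change the
kernel. It has only `s p` columns while `rank (mat W) = s p`, so the ranges agree as well. -/

namespace Matrix

variable {ι κ α β R : Type*}

theorem one_submatrix_id_mul [Fintype ι] [DecidableEq ι] [Semiring R] (c : κ → ι)
    (N : Matrix ι β R) : (1 : Matrix ι ι R).submatrix c id * N = N.submatrix c id := by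
  ext x b
  simp [mul_apply, one_apply]

theorem mul_one_submatrix_id [Fintype ι] [DecidableEq ι] [Semiring R] (c : κ → ι)
    (N : Matrix α ι R) : N * (1 : Matrix ι ι R).submatrix id c = N.submatrix id c := by
  ext a y
  simp [mul_apply, one_apply]

theorem transpose_one_submatrix_mul_self [Fintype ι] [DecidableEq ι] [DecidableEq κ] [Semiring R]
    {c : κ → ι} (hc : Function.Injective c) :
    ((1 : Matrix ι ι R).submatrix id c)ᵀ * (1 : Matrix ι ι R).submatrix id c = 1 := by
  rw [transpose_submatrix, transpose_one, one_submatrix_id_mul, submatrix_submatrix]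
  exact submatrix_one c hc

theorem eq_one_submatrix_mul_of_row_eq_zero [Fintype κ] [DecidableEq ι] [Semiring R]
    {c : κ → ι} (hc : Function.Injective c) {N : Matrix ι β R}
    (hN : ∀ x ∉ Set.range c, ∀ b, N x b = 0) :
    N = (1 : Matrix ι ι R).submatrix id c * N.submatrix c id := by
  ext x b
  by_cases hx : x ∈ Set.range c
  · obtain ⟨y, rfl⟩ := hx
    rw [mul_apply, Finset.sum_eq_single y]
    · simp [one_apply]
    · intro z _ hz
      simp [hc.ne (Ne.symm hz)]
    · simp
  · have hx' : ∀ y, x ≠ c y := fun y h => hx ⟨y, h.symm⟩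
    simp [mul_apply, hN x hx b, hx']

theorem ker_mulVecLin_mul_of_mul_eq_one [Fintype ι] [Fintype α] [Fintype β] [DecidableEq ι]
    [CommSemiring R] {L : Matrix ι α R} {A : Matrix α ι R} (B : Matrix ι β R)
    (hLA : L * A = 1) :
    LinearMap.ker (A * B).mulVecLin = LinearMap.ker B.mulVecLin := by
  rw [mulVecLin_mul]
  refine LinearMap.ker_comp_of_ker_eq_bot _ (ker_mulVecLin_eq_bot_iff.2 fun v hv => ?_)
  simpa [mulVec_mulVec, hLA] using congrArg (L *ᵥ ·) hv

theorem range_mulVecLin_eq_of_eq_mul_of_rank_le [Fintype ι] [Fintype α] [Field R]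
    {W : Matrix β α R} {A : Matrix β ι R} {B : Matrix ι α R} (hW : W = A * B)
    (hrank : A.rank ≤ W.rank) :
    LinearMap.range W.mulVecLin = LinearMap.range A.mulVecLin := by
  subst hW
  refine Submodule.eq_of_le_of_finrank_le ?_ hrank
  rw [mulVecLin_mul]
  exact LinearMap.range_comp_le_range _ _

end Matrix

section MTransform

variable {m n k p : ℕ} (M : Matrix (Fin p) (Fin p) ℂ)

theorem hatT_sum_nonsing_inv_smul (hM : IsUnit M.det) (C : Tensor m n p) :
    hatT M (fun l => ∑ s, M⁻¹ l s • C s) = C := by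
  funext l
  calc ∑ t, M l t • ∑ s, M⁻¹ t s • C s
      = ∑ s, (M * M⁻¹) l s • C s := by
        simp only [Finset.smul_sum, smul_smul, mul_apply, Finset.sum_smul]
        exact Finset.sum_comm
    _ = C l := by simp [mul_nonsing_inv M hM, one_apply, ite_smul]

theorem matT_mprod (hM : IsUnit M.det) (A : Tensor m n p) (B : Tensor n k p) :
    matT M (mprod M A B) = matT M A * matT M B := by
  unfold matT mprod
  rw [hatT_sum_nonsing_inv_smul M hM, ← blockDiagonal_mul]

theorem matT_mstar (hM : IsUnit M.det) (A : Tensor m n p) :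
    matT M (mstar M A) = (matT M A)ᴴ := by
  unfold matT mstar
  rw [hatT_sum_nonsing_inv_smul M hM, ← blockDiagonal_conjTranspose]

theorem matT_idT (hM : IsUnit M.det) : matT M (idT M m) = 1 := by
  unfold matT idT
  rw [hatT_sum_nonsing_inv_smul M hM]
  exact blockDiagonal_one

theorem matT_mul_eq_one_of_mprod_eq_idT (hM : IsUnit M.det) {A B : Tensor m m p}
    (h : mprod M A B = idT M m) : matT M A * matT M B = 1 := by
  rw [← matT_mprod M hM, h, matT_idT M hM]

end MTransform

section Slices

variable {m n s p : ℕ} (M : Matrix (Fin p) (Fin p) ℂ) (hsn : s ≤ n)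

def sliceIndex (p : ℕ) : Fin s × Fin p → Fin n × Fin p :=
  Prod.map (Fin.castLE hsn) id

theorem sliceIndex_injective : Function.Injective (sliceIndex hsn p) :=
  (Fin.castLE_injective hsn).prodMap Function.injective_id

theorem matT_latSlice (Q : Tensor n n p) :
    matT M (latSlice hsn Q) = (matT M Q).submatrix id (sliceIndex hsn p) := by
  ext ⟨i, l⟩ ⟨j, l'⟩
  by_cases h : l = l' <;>
    simp [matT, hatT, latSlice, sliceIndex, blockDiagonal_apply, Matrix.sum_apply, h]

theorem matT_horSlice (R : Tensor n m p) :
    matT M (horSlice hsn R) = (matT M R).submatrix (sliceIndex hsn p) id := by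
  ext ⟨i, l⟩ ⟨j, l'⟩
  by_cases h : l = l' <;>
    simp [matT, hatT, horSlice, sliceIndex, blockDiagonal_apply, Matrix.sum_apply, h]

theorem matT_row_eq_zero_of_notMem_range_sliceIndex {R : Tensor n m p}
    (hR : ∀ l (i : Fin n), s ≤ (i : ℕ) → ∀ j, R l i j = 0) :
    ∀ x ∉ Set.range (sliceIndex hsn p), ∀ b, matT M R x b = 0 := by
  rintro ⟨i, l⟩ hx b
  have hi : s ≤ (i : ℕ) := by
    by_contra! hi
    exact hx ⟨(⟨i, hi⟩, l), rfl⟩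
  simp [matT, hatT, blockDiagonal_apply, Matrix.sum_apply, hR _ i hi]

end Slices

theorem outer_inverse_MQR_range_null_general {m n p s : ℕ} (hsn : s ≤ n)
    (M : Matrix (Fin p) (Fin p) ℂ) (hM : IsUnit M.det)
    (W : Tensor n m p)
    (P : Tensor m m p) (Q : Tensor n n p) (R : Tensor n m p)
    (hrW : rankM M W = s * p)
    (hQR : mprod M W P = mprod M Q R)
    (hP1 : mprod M P (mstar M P) = idT M m)
    (hQ2 : mprod M (mstar M Q) Q = idT M n)
    (hRvanish : ∀ l (i : Fin n), s ≤ (i : ℕ) → ∀ j, R l i j = 0)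
    (X : Tensor n m p)
    (hRX : rangeM M X = rangeM M W) (hNX : kerM M X = kerM M W) :
    rangeM M X = rangeM M (latSlice hsn Q) ∧
      kerM M X = kerM M (mprod M (horSlice hsn R) (mstar M P)) := by
  set E : Matrix _ _ ℂ := (1 : Matrix (Fin n × Fin p) (Fin n × Fin p) ℂ).submatrix id
    (sliceIndex hsn p)
  have hP : matT M P * (matT M P)ᴴ = 1 := by
    rw [← matT_mstar M hM]; exact matT_mul_eq_one_of_mprod_eq_idT M hM hP1
  have hQ : (matT M Q)ᴴ * matT M Q = 1 := by
    rw [← matT_mstar M hM]; exact matT_mul_eq_one_of_mprod_eq_idT M hM hQ2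
  have hQt : matT M (latSlice hsn Q) = matT M Q * E := by
    rw [matT_latSlice, mul_one_submatrix_id]
  have hR : matT M R = E * matT M (horSlice hsn R) := by
    rw [matT_horSlice]
    exact eq_one_submatrix_mul_of_row_eq_zero (sliceIndex_injective hsn)
      (matT_row_eq_zero_of_notMem_range_sliceIndex M hsn hRvanish)
  have hW :
      matT M W = matT M (latSlice hsn Q) * matT M (mprod M (horSlice hsn R) (mstar M P)) :=
    calc matT M W = matT M W * matT M P * (matT M P)ᴴ := by
          rw [Matrix.mul_assoc, hP, Matrix.mul_one]
      _ = matT M Q * matT M R * (matT M P)ᴴ := by rw [← matT_mprod M hM, hQR, matT_mprod M hM]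
      _ = _ := by rw [hR, hQt, matT_mprod M hM, matT_mstar M hM]; simp only [Matrix.mul_assoc]
  have hQt_left : (Eᵀ * (matT M Q)ᴴ) * matT M (latSlice hsn Q) = 1 := by
    rw [hQt, Matrix.mul_assoc, ← Matrix.mul_assoc _ _ E, hQ, Matrix.one_mul,
      transpose_one_submatrix_mul_self (sliceIndex_injective hsn)]
  have hrank : (matT M (latSlice hsn Q)).rank ≤ (matT M W).rank := by
    have hrW' : (matT M W).rank = s * p := hrW
    simpa [hrW'] using rank_le_card_width (matT M (latSlice hsn Q))
  constructor
  · rw [hRX]; exact range_mulVecLin_eq_of_eq_mul_of_rank_le hW hrank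
  · rw [hNX, kerM, hW]; exact ker_mulVecLin_mul_of_mul_eq_one _ hQt_left

/-- Theorem 3.3 (c): the outer inverse determined by `W` has range `R_M(Q̃)` and
null space `N_M(R̃ *_M P^*)`. -/
theorem outer_inverse_MQR_range_null {m n p r s : ℕ} (hsn : s ≤ n)
    (M : Matrix (Fin p) (Fin p) ℂ) (hM : IsUnit M.det)
    (A : Tensor m n p) (W : Tensor n m p)
    (P : Tensor m m p) (Q : Tensor n n p) (R : Tensor n m p)
    (hrA : rankM M A = r * p) (hrW : rankM M W = s * p) (hle : s * p ≤ r * p)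
    (hQR : mprod M W P = mprod M Q R)
    (hP1 : mprod M P (mstar M P) = idT M m) (hP2 : mprod M (mstar M P) P = idT M m)
    (hQ1 : mprod M Q (mstar M Q) = idT M n) (hQ2 : mprod M (mstar M Q) Q = idT M n)
    (hrR : rankM M R = s * p)
    (hRvanish : ∀ l (i : Fin n), s ≤ (i : ℕ) → ∀ j, R l i j = 0)
    (hrRt : rankM M (horSlice hsn R) = s * p)
    (X : Tensor n m p)
    (hout : mprod M X (mprod M A X) = X)
    (hRX : rangeM M X = rangeM M W) (hNX : kerM M X = kerM M W) :
    rangeM M X = rangeM M (latSlice hsn Q) ∧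
      kerM M X = kerM M (mprod M (horSlice hsn R) (mstar M P)) :=
  outer_inverse_MQR_range_null_general hsn M hM W P Q R hrW hQR hP1 hQ2 hRvanish X hRX hNX
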